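/- arXiv:1510.07903 — 4 statements merged into one kernel-verified Lean document; each statement's English description precedes it below -/
import Mathlib

section
/- Let n ≥ 3 and let S = ℚ[ε]/(ε^{n−1}). Set a1 = 0, a2 = ε, and bᵢ = (i+1)·εⁱ for 1 ≤ i ≤ n−2 in S. Then the identity (1 − (2a2 − a1²)x² + a2²x⁴)·(1 + b1x² + b2x⁴ + ⋯ + b_{n−2}x^{2n−4}) = 1 + a1·x^{2n} holds in S[x]. -/
/-!
In `S[x]` the first factor is `(1 - t)²` with `t = ε x²`, and the second is the truncation
of `∑ (i + 1) tⁱ = (1 - t)⁻²`. Multiplying the two gives `1` up to terms divisible by `t^(n-1)`,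
which vanish because `ε^(n-1) = 0`; the right-hand side is `1` since `a1 = 0`.
-/

open Polynomial Finset

section DerivativeOfGeometricSum

variable {R : Type*} [CommRing R]

theorem one_sub_sq_mul_sum_range_succ_mul_pow (t : R) (m : ℕ) :
    (1 - t) ^ 2 * ∑ i ∈ range (m + 1), ((i + 1 : ℕ) : R) * t ^ i =
      1 - ((m + 2 : ℕ) : R) * t ^ (m + 1) + ((m + 1 : ℕ) : R) * t ^ (m + 2) := by
  induction m with
  | zero =>
    rw [zero_add, sum_range_one]
    push_cast
    ring
  | succ k ih =>
    rw [sum_range_succ, mul_add, ih]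
    push_cast
    ring

theorem one_sub_sq_mul_sum_range_succ_mul_pow_of_pow_eq_zero {t : R} {m : ℕ}
    (ht : t ^ (m + 1) = 0) :
    (1 - t) ^ 2 * ∑ i ∈ range (m + 1), ((i + 1 : ℕ) : R) * t ^ i = 1 := by
  rw [one_sub_sq_mul_sum_range_succ_mul_pow, pow_succ t (m + 1), ht]
  simp

theorem one_add_sum_Icc_one_succ_mul_pow (t : R) (m : ℕ) :
    1 + ∑ i ∈ Icc 1 m, ((i + 1 : ℕ) : R) * t ^ i =
      ∑ i ∈ range (m + 1), ((i + 1 : ℕ) : R) * t ^ i := by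
  rw [Nat.range_succ_eq_Icc_zero, ← Finset.insert_Icc_add_one_left_eq_Icc m.zero_le,
    sum_insert (by simp)]
  simp

end DerivativeOfGeometricSum

theorem small_qh_relation_of_pow_eq_zero {R : Type*} [CommRing R] {ε : R} {m : ℕ}
    (hε : ε ^ (m + 1) = 0) :
    (1 - C (2 * ε) * X ^ 2 + C (ε ^ 2) * X ^ 4) *
        (1 + ∑ i ∈ Icc 1 m, C (((i + 1 : ℕ) : R) * ε ^ i) * X ^ (2 * i)) = 1 := by
  set t : R[X] := C ε * X ^ 2
  have h_first : (1 : R[X]) - C (2 * ε) * X ^ 2 + C (ε ^ 2) * X ^ 4 = (1 - t) ^ 2 := by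
    simp only [t, map_mul, map_pow, map_ofNat]
    ring
  have h_second : ∀ i, C (((i + 1 : ℕ) : R) * ε ^ i) * X ^ (2 * i) =
      ((i + 1 : ℕ) : R[X]) * t ^ i := by
    intro i
    simp only [t, map_mul, map_pow, map_natCast, mul_pow, pow_mul]
    ring
  have ht : t ^ (m + 1) = 0 := by
    simp only [t, mul_pow, ← C_pow, hε, map_zero, zero_mul]
  simp only [h_first, h_second, one_add_sum_Icc_one_succ_mul_pow,
    one_sub_sq_mul_sum_range_succ_mul_pow_of_pow_eq_zero ht]

theorem small_qh_relation_solution_over_nilpotents_general (n : ℕ) :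
    let S := (Polynomial ℚ) ⧸ Ideal.span {(X : Polynomial ℚ) ^ (n - 1)}
    let ε : S := Ideal.Quotient.mk _ X
    let a1 : S := 0
    let a2 : S := ε
    let b : ℕ → S := fun i => ((i + 1 : ℕ) : S) * ε ^ i
    (1 - C (2 * a2 - a1 ^ 2) * X ^ 2 + C (a2 ^ 2) * X ^ 4) *
        (1 + ∑ i ∈ Finset.Icc 1 (n - 2), C (b i) * X ^ (2 * i)) =
      1 + C a1 * X ^ (2 * n) := by
  intro S ε a1 a2 b
  have hε : ε ^ (n - 1) = 0 := by
    rw [← map_pow, Ideal.Quotient.eq_zero_iff_mem]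
    exact Ideal.mem_span_singleton_self _
  have hε' : ε ^ (n - 2 + 1) = 0 := pow_eq_zero_of_le (by omega) hε
  simpa [a1, a2, b] using small_qh_relation_of_pow_eq_zero hε'

theorem small_qh_relation_solution_over_nilpotents (n : ℕ) (hn : 3 ≤ n) :
    let S := (Polynomial ℚ) ⧸ Ideal.span {(X : Polynomial ℚ) ^ (n - 1)}
    let ε : S := Ideal.Quotient.mk _ X
    let a1 : S := 0
    let a2 : S := ε
    let b : ℕ → S := fun i => ((i + 1 : ℕ) : S) * ε ^ i
    (1 - C (2 * a2 - a1 ^ 2) * X ^ 2 + C (a2 ^ 2) * X ^ 4) *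
        (1 + ∑ i ∈ Finset.Icc 1 (n - 2), C (b i) * X ^ (2 * i)) =
      1 + C a1 * X ^ (2 * n) :=
  small_qh_relation_solution_over_nilpotents_general n
end

section
/- Let K be an algebraically closed field of characteristic zero and n ≥ 2. The set {(z1, z2) ∈ K² : z1 ≠ 0, z2 ≠ 0, z1 ≠ z2, z1^{2n} = z1 + z2, z2^{2n} = z1 + z2} has exactly 2(n−1)(2n−1) elements. -/
/-! The ratio `ζ = z₂ / z₁` of an off-origin solution is an `m`-th root of unity (`m = 2n`) other
than `±1`, and `z₁ ^ (m - 1) = 1 + ζ`; conversely each such `ζ` and each `(m - 1)`-th root `z` of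
`1 + ζ ≠ 0` give the solution `(z, ζ z)`. Over an algebraically closed field of characteristic
zero there are `2n - 2` such `ζ` and `2n - 1` roots `z` for each of them. -/

open Polynomial Finset

section

variable {K : Type*} [Field K]

lemma card_nthRootsFinset_of_ne_zero [IsAlgClosed K] [CharZero K] (m : ℕ) {a : K} (ha : a ≠ 0) :
    #(nthRootsFinset m a) = m := by
  classical
  rcases Nat.eq_zero_or_pos m with rfl | hm
  · simp
  have : NeZero (m : K) := ⟨Nat.cast_ne_zero.mpr hm.ne'⟩
  obtain ⟨ζ, hζ⟩ := HasEnoughRootsOfUnity.exists_primitiveRoot K m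
  rw [nthRootsFinset_def, Multiset.toFinset_card_of_nodup (hζ.nthRoots_nodup ha),
    hζ.card_nthRoots, if_pos (IsAlgClosed.exists_pow_nat_eq a hm)]

lemma card_nthRootsFinset_two_mul_erase_one_erase_neg_one [IsAlgClosed K] [CharZero K]
    [DecidableEq K] (n : ℕ) :
    #(((nthRootsFinset (2 * n) (1 : K)).erase 1).erase (-1)) = 2 * n - 2 := by
  rcases Nat.eq_zero_or_pos n with rfl | hn
  · simp
  have hneg : (-1 : K) ∈ (nthRootsFinset (2 * n) (1 : K)).erase 1 :=
    mem_erase.mpr ⟨by norm_num, (mem_nthRootsFinset (by omega) 1).mpr (by simp)⟩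
  have hone : (1 : K) ∈ nthRootsFinset (2 * n) (1 : K) :=
    (mem_nthRootsFinset (by omega) 1).mpr (one_pow _)
  rw [card_erase_of_mem hneg, card_erase_of_mem hone, card_nthRootsFinset_of_ne_zero _ one_ne_zero]
  omega

lemma ne_zero_of_pow_eq_one_add {k : ℕ} (hk : k ≠ 0) {ζ z : K} (hζ : ζ ≠ -1)
    (hz : z ^ k = 1 + ζ) : z ≠ 0 := by
  rintro rfl
  exact hζ (neg_eq_iff_add_eq_zero.mpr (by rw [← hz, zero_pow hk])).symm

variable (K) in
def offOriginSolutions (m : ℕ) : Set (K × K) :=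
  {p | p.1 ≠ 0 ∧ p.2 ≠ 0 ∧ p.1 ≠ p.2 ∧ p.1 ^ m = p.1 + p.2 ∧ p.2 ^ m = p.1 + p.2}

lemma ratio_of_mem_offOriginSolutions {m : ℕ} (hm : m ≠ 0) {z₁ z₂ : K}
    (h : (z₁, z₂) ∈ offOriginSolutions K m) :
    (z₂ / z₁) ^ m = 1 ∧ z₂ / z₁ ≠ 1 ∧ z₂ / z₁ ≠ -1 ∧ z₁ ^ (m - 1) = 1 + z₂ / z₁ := by
  obtain ⟨h₁, h₂, hne, hpow₁, hpow₂⟩ := h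
  refine ⟨?_, fun h ↦ hne (div_eq_one_iff_eq h₁ |>.mp h).symm, fun h ↦ ?_, ?_⟩
  · rw [div_pow, hpow₁, hpow₂, div_self (hpow₂ ▸ pow_ne_zero _ h₂)]
  · have : z₁ ^ m = 0 := by rw [hpow₁, (div_eq_iff h₁).mp h]; ring
    exact h₁ (pow_eq_zero_iff hm |>.mp this)
  · rw [← mul_pow_sub_one hm z₁] at hpow₁
    field_simp
    linear_combination hpow₁

lemma mk_mem_offOriginSolutions {m : ℕ} (hm : m ≠ 0) {ζ z : K} (hζ : ζ ^ m = 1) (hζone : ζ ≠ 1)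
    (hz : z ^ (m - 1) = 1 + ζ) (hz₀ : z ≠ 0) : (z, ζ * z) ∈ offOriginSolutions K m := by
  have hzpow : z ^ m = z + ζ * z := by
    rw [← mul_pow_sub_one hm, hz]; ring
  refine ⟨hz₀, mul_ne_zero (by rintro rfl; simp [zero_pow hm] at hζ) hz₀,
    fun h ↦ hζone (mul_right_cancel₀ hz₀ (h.symm.trans (one_mul z).symm)), hzpow,
    by rw [mul_pow, hζ, one_mul, hzpow]⟩

lemma offOriginSolutions_eq_image [DecidableEq K] {m : ℕ} (hm : 1 < m) :
    offOriginSolutions K m = (fun q : Σ _ : K, K ↦ (q.2, q.1 * q.2)) ''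
      ↑((((nthRootsFinset m (1 : K)).erase 1).erase (-1)).sigma
        fun ζ ↦ nthRootsFinset (m - 1) (1 + ζ)) := by
  ext ⟨z₁, z₂⟩
  simp only [Set.mem_image, mem_coe, mem_sigma, mem_erase, mem_nthRootsFinset (by omega : 0 < m),
    mem_nthRootsFinset (by omega : 0 < m - 1), Sigma.exists, Prod.mk.injEq]
  constructor
  · intro h
    obtain ⟨hζ, hζone, hζneg, hz⟩ := ratio_of_mem_offOriginSolutions (by omega) h
    exact ⟨z₂ / z₁, z₁, ⟨⟨hζneg, hζone, hζ⟩, hz⟩, rfl, div_mul_cancel₀ z₂ h.1⟩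
  · rintro ⟨ζ, z, ⟨⟨hζneg, hζone, hζ⟩, hz⟩, rfl, rfl⟩
    exact mk_mem_offOriginSolutions (by omega) hζ hζone hz
      (ne_zero_of_pow_eq_one_add (by omega) hζneg hz)

lemma ncard_offOriginSolutions [IsAlgClosed K] [CharZero K] [DecidableEq K] {m : ℕ} (hm : 1 < m) :
    (offOriginSolutions K m).ncard =
      #(((nthRootsFinset m (1 : K)).erase 1).erase (-1)) * (m - 1) := by
  rw [offOriginSolutions_eq_image hm, Set.InjOn.ncard_image, Set.ncard_coe_finset, card_sigma,
    sum_const_nat]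
  · intro ζ hζ
    refine card_nthRootsFinset_of_ne_zero _ fun h ↦ (mem_erase.mp hζ).1 ?_
    exact (neg_eq_iff_add_eq_zero.mpr h).symm
  · rintro ⟨ζ, z⟩ hq ⟨ζ', z'⟩ - h
    simp only [mem_coe, mem_sigma, mem_erase, mem_nthRootsFinset (by omega : 0 < m - 1)] at hq
    simp only [Prod.mk.injEq] at h
    obtain ⟨rfl, h⟩ := h
    rw [mul_right_cancel₀ (ne_zero_of_pow_eq_one_add (by omega) hq.1.1 hq.2) h]

end

theorem count_offorigin_solutions (K : Type*) [Field K] [IsAlgClosed K] [CharZero K]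
    (n : ℕ) (hn : 2 ≤ n) :
    Set.ncard {p : K × K | p.1 ≠ 0 ∧ p.2 ≠ 0 ∧ p.1 ≠ p.2 ∧
        p.1 ^ (2 * n) = p.1 + p.2 ∧ p.2 ^ (2 * n) = p.1 + p.2} =
      2 * (n - 1) * (2 * n - 1) := by
  classical
  change (offOriginSolutions K (2 * n)).ncard = _
  rw [ncard_offOriginSolutions (by omega), card_nthRootsFinset_two_mul_erase_one_erase_neg_one,
    show 2 * n - 2 = 2 * (n - 1) by omega]
end

section
/- The ℚ-vector space dimension of ℚ[a1, a2, b1]/(b1 − 2a2 + a1², a2² − b1·(2a2 − a1²), a2²·b1 − a1) equals 12. -/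
open MvPolynomial

noncomputable def smallQH_IG26 : Type :=
  MvPolynomial (Fin 3) ℚ ⧸
    Ideal.span {(X 2 : MvPolynomial (Fin 3) ℚ) - 2 * X 1 + (X 0) ^ 2,
      (X 1) ^ 2 - X 2 * (2 * X 1 - (X 0) ^ 2),
      (X 1) ^ 2 * X 2 - X 0}

noncomputable instance : CommRing smallQH_IG26 := Ideal.Quotient.commRing _
noncomputable instance : Algebra ℚ smallQH_IG26 := Ideal.Quotient.algebra ℚ

/-!
The first two relations give `b₁ = 2a₂ - a₁²` and then `a₂² = b₁²`, after which the third gives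
`a₁ = b₁³`, and so `2a₂ = b₁ + b₁⁶`. Eliminating `a₁` and `a₂` leaves the single relation
`(b₁ + b₁⁶)² = 4b₁²`, i.e. `b₁¹² + 2b₁⁷ - 3b₁² = 0`, so the ring is `ℚ[t]/(t¹² + 2t⁷ - 3t²)`,
of dimension `12`.
-/

lemma two_mul_algebraMap_inv_two (A : Type*) [Semiring A] [Algebra ℚ A] :
    2 * algebraMap ℚ A 2⁻¹ = 1 := by
  rw [← map_ofNat (algebraMap ℚ A) 2, ← map_mul, mul_inv_cancel₀ two_ne_zero, map_one]

namespace smallQH_IG26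

noncomputable def eliminant : Polynomial ℚ :=
  Polynomial.X ^ 12 + 2 * Polynomial.X ^ 7 - 3 * Polynomial.X ^ 2

lemma natDegree_eliminant : eliminant.natDegree = 12 := by
  unfold eliminant; compute_degree!

lemma aeval_eliminant {A : Type*} [CommRing A] [Algebra ℚ A] (x : A) :
    Polynomial.aeval x eliminant = x ^ 12 + 2 * x ^ 7 - 3 * x ^ 2 := by
  simp only [eliminant, map_add, map_sub, map_mul, map_pow, map_ofNat, Polynomial.aeval_X]

noncomputable def mk : MvPolynomial (Fin 3) ℚ →ₐ[ℚ] smallQH_IG26 := Ideal.Quotient.mkₐ ℚ _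

noncomputable def a₁ : smallQH_IG26 := mk (X 0)
noncomputable def a₂ : smallQH_IG26 := mk (X 1)
noncomputable def b₁ : smallQH_IG26 := mk (X 2)

lemma relations :
    b₁ - 2 * a₂ + a₁ ^ 2 = 0 ∧ a₂ ^ 2 - b₁ * (2 * a₂ - a₁ ^ 2) = 0 ∧ a₂ ^ 2 * b₁ - a₁ = 0 := by
  have h₁ : mk (X 2 - 2 * X 1 + X 0 ^ 2) = 0 :=
    Ideal.Quotient.eq_zero_iff_mem.mpr (Ideal.subset_span (by simp))
  have h₂ : mk (X 1 ^ 2 - X 2 * (2 * X 1 - X 0 ^ 2)) = 0 :=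
    Ideal.Quotient.eq_zero_iff_mem.mpr (Ideal.subset_span (by simp))
  have h₃ : mk (X 1 ^ 2 * X 2 - X 0) = 0 :=
    Ideal.Quotient.eq_zero_iff_mem.mpr (Ideal.subset_span (by simp))
  simp only [map_sub, map_add, map_mul, map_pow, map_ofNat] at h₁ h₂ h₃
  exact ⟨h₁, h₂, h₃⟩

lemma a₂_sq : a₂ ^ 2 = b₁ ^ 2 := by
  obtain ⟨h₁, h₂, -⟩ := relations
  linear_combination h₂ - b₁ * h₁

lemma a₁_eq : a₁ = b₁ ^ 3 := by
  obtain ⟨-, -, h₃⟩ := relations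
  linear_combination b₁ * a₂_sq - h₃

lemma two_mul_a₂ : 2 * a₂ = b₁ + b₁ ^ 6 := by
  obtain ⟨h₁, -, -⟩ := relations
  linear_combination -h₁ + (a₁ + b₁ ^ 3) * a₁_eq

lemma aeval_b₁_eliminant : Polynomial.aeval b₁ eliminant = 0 := by
  rw [aeval_eliminant]
  linear_combination 4 * a₂_sq - (2 * a₂ + b₁ + b₁ ^ 6) * two_mul_a₂

noncomputable def ofAdjoinRoot : AdjoinRoot eliminant →ₐ[ℚ] smallQH_IG26 :=
  AdjoinRoot.liftAlgHom eliminant (Algebra.ofId ℚ _) b₁ aeval_b₁_eliminant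

lemma ofAdjoinRoot_root : ofAdjoinRoot (AdjoinRoot.root eliminant) = b₁ :=
  AdjoinRoot.liftAlgHom_root _ _ _ _

local notation "t" => AdjoinRoot.root eliminant

noncomputable def evalRoot : MvPolynomial (Fin 3) ℚ →ₐ[ℚ] AdjoinRoot eliminant :=
  aeval ![t ^ 3, algebraMap ℚ _ 2⁻¹ * (t + t ^ 6), t]

lemma root_eliminant : t ^ 12 + 2 * t ^ 7 - 3 * t ^ 2 = 0 := by
  rw [← aeval_eliminant, AdjoinRoot.aeval_eq, AdjoinRoot.mk_self]

lemma evalRoot_relations :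
    evalRoot (X 2 - 2 * X 1 + X 0 ^ 2) = 0 ∧ evalRoot (X 1 ^ 2 - X 2 * (2 * X 1 - X 0 ^ 2)) = 0 ∧
      evalRoot (X 1 ^ 2 * X 2 - X 0) = 0 := by
  have h := two_mul_algebraMap_inv_two (AdjoinRoot eliminant)
  set c := algebraMap ℚ (AdjoinRoot eliminant) 2⁻¹
  simp only [evalRoot, map_add, map_sub, map_mul, map_pow, map_ofNat, aeval_X, Matrix.cons_val_zero,
    Matrix.cons_val_one, Matrix.cons_val_two, Matrix.head_cons, Matrix.tail_cons]
  refine ⟨?_, ?_, ?_⟩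
  · linear_combination (-(t + t ^ 6)) * h
  · linear_combination c ^ 2 * root_eliminant + ((2 * c + 1) * t ^ 2 - t * (t + t ^ 6)) * h
  · linear_combination c ^ 2 * t * root_eliminant + (2 * c + 1) * t ^ 3 * h

noncomputable def toAdjoinRoot : smallQH_IG26 →ₐ[ℚ] AdjoinRoot eliminant :=
  Ideal.Quotient.liftₐ _ evalRoot fun p hp => by
    refine (Ideal.span_le (I := RingHom.ker evalRoot)).mpr ?_ hp
    obtain ⟨h₁, h₂, h₃⟩ := evalRoot_relations
    rintro _ (rfl | rfl | rfl) <;> assumption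

lemma toAdjoinRoot_mk (p : MvPolynomial (Fin 3) ℚ) : toAdjoinRoot (mk p) = evalRoot p := rfl

lemma toAdjoinRoot_comp_ofAdjoinRoot : toAdjoinRoot.comp ofAdjoinRoot = AlgHom.id ℚ _ := by
  refine AdjoinRoot.algHom_ext ?_
  simp [ofAdjoinRoot_root, b₁, toAdjoinRoot_mk, evalRoot]

lemma ofAdjoinRoot_comp_evalRoot : ofAdjoinRoot.comp evalRoot = mk := by
  have hX₀ : ofAdjoinRoot (evalRoot (X 0)) = a₁ := by
    simp only [evalRoot, aeval_X, Matrix.cons_val_zero, map_pow, ofAdjoinRoot_root, a₁_eq]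
  have hX₁ : ofAdjoinRoot (evalRoot (X 1)) = a₂ := by
    simp only [evalRoot, aeval_X, Matrix.cons_val_one, Matrix.cons_val_zero, map_mul, map_add,
      map_pow, AlgHom.commutes, ofAdjoinRoot_root]
    linear_combination -algebraMap ℚ smallQH_IG26 2⁻¹ * two_mul_a₂ +
      a₂ * two_mul_algebraMap_inv_two smallQH_IG26
  have hX₂ : ofAdjoinRoot (evalRoot (X 2)) = b₁ := by
    simp only [evalRoot, aeval_X, Matrix.cons_val_two, Matrix.tail_cons, Matrix.head_cons,
      ofAdjoinRoot_root]
  refine MvPolynomial.algHom_ext fun i => ?_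
  fin_cases i
  exacts [hX₀, hX₁, hX₂]

lemma ofAdjoinRoot_comp_toAdjoinRoot : ofAdjoinRoot.comp toAdjoinRoot = AlgHom.id ℚ _ :=
  Ideal.Quotient.algHom_ext ℚ ofAdjoinRoot_comp_evalRoot

noncomputable def equivAdjoinRoot : smallQH_IG26 ≃ₐ[ℚ] AdjoinRoot eliminant :=
  AlgEquiv.ofAlgHom toAdjoinRoot ofAdjoinRoot toAdjoinRoot_comp_ofAdjoinRoot
    ofAdjoinRoot_comp_toAdjoinRoot

end smallQH_IG26

theorem smallQH_IG26_dim : Module.finrank ℚ smallQH_IG26 = 12 := by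
  rw [smallQH_IG26.equivAdjoinRoot.toLinearEquiv.finrank_eq, ← smallQH_IG26.natDegree_eliminant]
  exact finrank_quotient_span_eq_natDegree
end

section
/- The set of points (a1, a2, b1) ∈ ℂ³ with a1 ≠ 0 satisfying b1 = 2a2 − a1², a2² = b1·(2a2 − a1²), and a2²·b1 = a1 has exactly 10 elements. -/
/-!
Substituting the first equation into the second gives `b² = c²`, so `b = c` or `b = -c`.
The first equation then forces `b = c = a²` resp. `b = -c = a²/3`, and the third becomes
`a⁵ = 1` resp. `a⁵ = -27`. Each has five distinct complex roots, and the two root sets are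
disjoint, so there are `5 + 5` points.
-/

open Polynomial

theorem ncard_setOf_pow_eq {K : Type*} [Field K] [IsAlgClosed K] (n : ℕ) [NeZero (n : K)]
    {c : K} (hc : c ≠ 0) : {z : K | z ^ n = c}.ncard = n := by
  classical
  have : NeZero n := .of_neZero_natCast K
  have hn : 0 < n := Nat.pos_of_neZero n
  obtain ⟨ζ, hζ⟩ := HasEnoughRootsOfUnity.exists_primitiveRoot K n
  rw [← nthRootsFinset_toSet hn, Set.ncard_coe_finset, nthRootsFinset_def,
    Multiset.toFinset_card_of_nodup (hζ.nthRoots_nodup hc), hζ.card_nthRoots,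
    if_pos (IsAlgClosed.exists_pow_nat_eq c hn)]

theorem ig26_equations_iff {K : Type*} [Field K] (h3 : (3 : K) ≠ 0) {a b c : K} (ha : a ≠ 0) :
    (c = 2 * b - a ^ 2 ∧ b ^ 2 = c * (2 * b - a ^ 2) ∧ b ^ 2 * c = a) ↔
      (a ^ 5 = 1 ∧ b = a ^ 2 ∧ c = a ^ 2) ∨
        (a ^ 5 = -27 ∧ b = a ^ 2 / 3 ∧ c = -(a ^ 2 / 3)) := by
  constructor
  · rintro ⟨hc, hbc, hprod⟩
    rw [← hc, ← sq, sq_eq_sq_iff_eq_or_eq_neg] at hbc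
    rcases hbc with rfl | rfl
    · obtain rfl : b = a ^ 2 := by linear_combination -hc
      refine Or.inl ⟨mul_left_cancel₀ ha ?_, rfl, rfl⟩
      linear_combination hprod
    · obtain rfl : c = -(a ^ 2 / 3) := by field_simp; linear_combination hc
      refine Or.inr ⟨?_, by ring, rfl⟩
      field_simp at hprod
      linear_combination -hprod
  · rintro (⟨h5, rfl, rfl⟩ | ⟨h5, rfl, rfl⟩)
    · exact ⟨by ring, by ring, by linear_combination a * h5⟩
    · refine ⟨by field_simp; ring, by field_simp; ring, ?_⟩
      field_simp
      linear_combination -h5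

theorem ig26_solutions_eq_union {K : Type*} [Field K] (h3 : (3 : K) ≠ 0) :
    {p : K × K × K | p.1 ≠ 0 ∧ p.2.2 = 2 * p.2.1 - p.1 ^ 2 ∧
        p.2.1 ^ 2 = p.2.2 * (2 * p.2.1 - p.1 ^ 2) ∧ p.2.1 ^ 2 * p.2.2 = p.1} =
      (fun a => (a, a ^ 2, a ^ 2)) '' {a | a ^ 5 = 1} ∪
        (fun a => (a, a ^ 2 / 3, -(a ^ 2 / 3))) '' {a | a ^ 5 = -27} := by
  ext ⟨a, b, c⟩
  simp only [Set.mem_ofPred_eq, Set.mem_union, Set.mem_image, Prod.mk.injEq]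
  constructor
  · rintro ⟨ha, h⟩
    rcases (ig26_equations_iff h3 ha).1 h with ⟨h5, rfl, rfl⟩ | ⟨h5, rfl, rfl⟩
    exacts [Or.inl ⟨a, h5, rfl, rfl, rfl⟩, Or.inr ⟨a, h5, rfl, rfl, rfl⟩]
  · rintro (⟨a, h5, rfl, rfl, rfl⟩ | ⟨a, h5, rfl, rfl, rfl⟩)
    · have ha : a ≠ 0 := by rintro rfl; norm_num at h5
      exact ⟨ha, (ig26_equations_iff h3 ha).2 (Or.inl ⟨h5, rfl, rfl⟩)⟩
    · have ha : a ≠ 0 := by rintro rfl; exact pow_ne_zero 3 h3 (by linear_combination h5)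
      exact ⟨ha, (ig26_equations_iff h3 ha).2 (Or.inr ⟨h5, rfl, rfl⟩)⟩

theorem IG26_reduced_points_count :
    Set.ncard {p : ℂ × ℂ × ℂ | p.1 ≠ 0 ∧ p.2.2 = 2 * p.2.1 - p.1 ^ 2 ∧
        p.2.1 ^ 2 = p.2.2 * (2 * p.2.1 - p.1 ^ 2) ∧ p.2.1 ^ 2 * p.2.2 = p.1} = 10 := by
  have h1 : {a : ℂ | a ^ 5 = 1}.ncard = 5 := ncard_setOf_pow_eq 5 one_ne_zero
  have h27 : {a : ℂ | a ^ 5 = -27}.ncard = 5 := ncard_setOf_pow_eq 5 (by norm_num)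
  have hdisj : Disjoint ((fun a => (a, a ^ 2, a ^ 2)) '' {a : ℂ | a ^ 5 = 1})
      ((fun a => (a, a ^ 2 / 3, -(a ^ 2 / 3))) '' {a | a ^ 5 = -27}) := by
    refine Set.disjoint_left.mpr ?_
    rintro _ ⟨a, ha, rfl⟩ ⟨b, hb, hba⟩
    obtain rfl : b = a := congrArg Prod.fst hba
    have : (1 : ℂ) = -27 := ha.symm.trans hb
    norm_num at this
  rw [ig26_solutions_eq_union (by norm_num),
    Set.ncard_union_eq hdisj ((Set.finite_of_ncard_pos (by omega)).image _)
      ((Set.finite_of_ncard_pos (by omega)).image _),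
    Set.ncard_image_of_injective _ fun _ _ h => congrArg Prod.fst h,
    Set.ncard_image_of_injective _ fun _ _ h => congrArg Prod.fst h, h1, h27]
end
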